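/- arXiv:1302.2256 — 9 statements merged into one kernel-verified Lean document; each statement's English description precedes it below -/
import Mathlib

section
/- Let k ≥ 1 and let φ : ℕ → ℕ satisfy the finite Ramsey arrow condition w → (φ(w))¹_{k+1} for all w (i.e., for every set X of size w and every coloring of X with k+1 colors there is a monochromatic subset of size φ(w)). Then for every m there exists w > m such that w - m → (φ(w))¹_k, i.e., every coloring of any (w-m)-element set with k colors has a monochromatic subset of size φ(w). -/
/-!
Take `w = (k + 1) * m + 1`. Coloring `w` points by their residues mod `k + 1` leaves no color
class larger than `m + 1`, so `φ w ≤ m + 1`; on the other hand `w - m = k * m + 1`, and by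
pigeonhole any `k`-coloring of `k * m + 1` points has a color class of size `m + 1`.
-/

/-- Finite Ramsey arrow for singletons: `a → (b)¹_c`. Every `c`-coloring of any
`a`-element set of naturals has a monochromatic subset of size `b`. -/
def Arrow1 (a b c : ℕ) : Prop :=
  ∀ X : Finset ℕ, X.card = a → ∀ f : ℕ → Fin c,
    ∃ Y ⊆ X, Y.card = b ∧ ∃ i : Fin c, ∀ y ∈ Y, f y = i

theorem arrow1_of_mul_lt {a b c n : ℕ} (h : c * n < a) (hb : b ≤ n + 1) : Arrow1 a b c := by
  intro X hX f
  obtain ⟨i, -, hi⟩ := Finset.exists_lt_card_fiber_of_mul_lt_card_of_maps_to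
    (t := Finset.univ) (fun x (_ : x ∈ X) => Finset.mem_univ (f x)) (by simpa [hX] using h)
  obtain ⟨Y, hY, hYcard⟩ :=
    Finset.exists_subset_card_eq (show b ≤ (X.filter (f · = i)).card by omega)
  refine ⟨Y, hY.trans (Finset.filter_subset _ _), hYcard, i, fun y hy => ?_⟩
  exact (Finset.mem_filter.1 (hY hy)).2

theorem Arrow1.le_of_le_mul {a b c n : ℕ} (h : Arrow1 a b (c + 1)) (ha : a ≤ (c + 1) * n) :
    b ≤ n := by
  obtain ⟨Y, hY, rfl, i, hi⟩ := h (Finset.range a) (Finset.card_range a) (Fin.ofNat (c + 1))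
  have hmod : ∀ y ∈ Y, y % (c + 1) = i := fun y hy => by
    rw [← hi y hy, Fin.val_ofNat]
  have hquot_lt : ∀ y ∈ Y, y / (c + 1) ∈ Finset.range n := fun y hy => by
    have := Finset.mem_range.1 (hY hy)
    exact Finset.mem_range.2 (Nat.div_lt_of_lt_mul (by omega))
  have hquot_inj : Set.InjOn (· / (c + 1)) Y :=
    fun x hx y hy (hxy : x / (c + 1) = y / (c + 1)) => by
      rw [← Nat.div_add_mod x (c + 1), ← Nat.div_add_mod y (c + 1), hmod x hx, hmod y hy, hxy]
  simpa using Finset.card_le_card_of_injOn _ hquot_lt hquot_inj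

theorem stmt0_general (k : ℕ) (φ : ℕ → ℕ)
    (hφ : ∀ w, Arrow1 w (φ w) (k + 1)) :
    ∀ m : ℕ, ∃ w > m, Arrow1 (w - m) (φ w) k := by
  intro m
  have hφw : φ ((k + 1) * m + 1) ≤ m + 1 :=
    (hφ _).le_of_le_mul (by rw [mul_add_one]; omega)
  have hw : (k + 1) * m + 1 - m = k * m + 1 := by rw [add_one_mul]; omega
  refine ⟨(k + 1) * m + 1, by omega, ?_⟩
  exact arrow1_of_mul_lt (by omega) hφw

theorem stmt0 (k : ℕ) (hk : 1 ≤ k) (φ : ℕ → ℕ)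
    (hφ : ∀ w, Arrow1 w (φ w) (k + 1)) :
    ∀ m : ℕ, ∃ w > m, Arrow1 (w - m) (φ w) k :=
  stmt0_general k φ hφ
end

section
/- Let k ≥ 1, let φ : ℕ → ℕ satisfy w → (φ(w))¹_{k+1} for all w with liminf_w φ(w) = ∞, and let f : ℕ → Fin k be any coloring of singletons. Then there exists a set A ⊆ ℕ that is homogeneous for f (f is constant on A) and packed for φ, i.e., |A ∩ {1,…,w}| ≥ φ(w) for infinitely many w. -/
/-!
For each `w`, the arrow `w → (φ w)¹_{k+1}`, which implies the same arrow for `k` colours, applied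
to `f` on `{1,…,w}` yields a colour `c` with `φ(w) ≤ |f⁻¹(c) ∩ {1,…,w}|`. With infinitely many `w`
and only `k` colours, one colour serves infinitely many `w`, and its fibre is homogeneous and packed.
-/

open Filter

/-- `A` is packed for `φ`: `|A ∩ {1,…,w}| ≥ φ(w)` for infinitely many `w`. -/
def Packed (φ : ℕ → ℕ) (A : Set ℕ) : Prop :=
  ∀ m : ℕ, ∃ w ≥ m, φ w ≤ (A ∩ Set.Icc 1 w).ncard

theorem Arrow1.of_le {a b c c' : ℕ} (h : Arrow1 a b c') (hc : c ≤ c') : Arrow1 a b c := by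
  intro X hX f
  obtain ⟨Y, hYX, hY, i, hi⟩ := h X hX (Fin.castLE hc ∘ f)
  refine ⟨Y, hYX, hY, ?_⟩
  rcases Y.eq_empty_or_nonempty with rfl | ⟨y, hy⟩
  · exact ⟨f 0, by simp⟩
  · exact ⟨f y, fun z hz => Fin.castLE_injective hc ((hi z hz).trans (hi y hy).symm)⟩

theorem Arrow1.exists_le_ncard_fiber {a b c : ℕ} (h : Arrow1 a b c) {X : Finset ℕ}
    (hX : X.card = a) (f : ℕ → Fin c) : ∃ i, b ≤ (f ⁻¹' {i} ∩ X).ncard := by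
  obtain ⟨Y, hYX, hY, i, hi⟩ := h X hX f
  refine ⟨i, ?_⟩
  have hYsub : (Y : Set ℕ) ⊆ f ⁻¹' {i} ∩ X := fun y hy => ⟨hi y hy, hYX hy⟩
  calc b = (Y : Set ℕ).ncard := by rw [Set.ncard_coe_finset, hY]
    _ ≤ _ := Set.ncard_le_ncard hYsub (X.finite_toSet.subset Set.inter_subset_right)

theorem stmt1_general (k : ℕ) (φ : ℕ → ℕ)
    (hφ : ∀ w, Arrow1 w (φ w) (k + 1))
    (f : ℕ → Fin k) :
    ∃ A : Set ℕ, (∃ c : Fin k, ∀ a ∈ A, f a = c) ∧ Packed φ A := by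
  have hfiber (w : ℕ) : ∃ c, φ w ≤ (f ⁻¹' {c} ∩ Set.Icc 1 w).ncard := by
    simpa using ((hφ w).of_le k.le_succ).exists_le_ncard_fiber (X := Finset.Icc 1 w) (by simp) f
  choose g hg using hfiber
  obtain ⟨c, hc⟩ := Finite.exists_infinite_fiber g
  refine ⟨f ⁻¹' {c}, ⟨c, fun a ha => ha⟩, fun m => ?_⟩
  obtain ⟨w, hwc, hmw⟩ := (Set.infinite_coe_iff.mp hc).exists_gt m
  exact ⟨w, hmw.le, hwc ▸ hg w⟩

theorem stmt1 (k : ℕ) (hk : 1 ≤ k) (φ : ℕ → ℕ)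
    (hφ : ∀ w, Arrow1 w (φ w) (k + 1))
    (hlim : Tendsto φ atTop atTop)
    (f : ℕ → Fin k) :
    ∃ A : Set ℕ, (∃ c : Fin k, ∀ a ∈ A, f a = c) ∧ Packed φ A :=
  stmt1_general k φ hφ f
end

section
/- Fix n ≥ 1 and φ : ℕ → ℕ with liminf_w φ(w) = ∞. Then there exists a coloring g : [ℕ]ⁿ → Fin(2^{n-1}) such that for every infinite set A ⊆ ℕ, either A is sparse for φ (not packed), or g assigns all 2^{n-1} colors to n-element subsets of A, i.e., {g(Z) : Z ∈ [A]ⁿ} has cardinality 2^{n-1}. -/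
/-!
Choose blocks `(w i, w (i+1)]` growing so fast that `φ v ≥ w i + 2n` once `v ≥ w (i+1)`. If `A` is
packed, a witness `v` in block `i + 1` has `|A ∩ [1, v]| ≥ w i + 2n`, and at most `w i` of these
elements lie in `[1, w i]`, so block `i` or block `i + 1` holds `n` elements of `A`: infinitely many
blocks are fat. Colour an `n`-set by the positions where consecutive elements change block. Taking
the `k`-th element from the `s k`-th fat block, where `s` is nondecreasing with steps `0` or `1`
prescribed by a pattern, realizes every pattern.
-/

open Filter

open Finset

theorem exists_strictMono_forall_succ {P : ℕ → ℕ → Prop} (h : ∀ x, ∀ᶠ y in atTop, P x y) :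
    ∃ w : ℕ → ℕ, StrictMono w ∧ ∀ i, P (w i) (w (i + 1)) := by
  choose F hF using fun x => ((h x).and (eventually_gt_atTop x)).exists
  refine ⟨fun i => F^[i] 0, strictMono_nat_of_lt_succ fun i => ?_, fun i => ?_⟩
  · simpa only [Function.iterate_succ_apply'] using (hF _).2
  · simpa only [Function.iterate_succ_apply'] using (hF _).1

theorem exists_orderEmbedding_fin_mem {α : Type*} [LinearOrder α] {S : Set α} {n : ℕ}
    (hS : S.Finite) (h : n ≤ S.ncard) : ∃ e : Fin n ↪o α, ∀ k, e k ∈ S := by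
  rw [Set.ncard_eq_toFinset_card S hS] at h
  exact ⟨hS.toFinset.orderEmbOfCardLe h, fun k => hS.mem_toFinset.1 (orderEmbOfCardLe_mem _ h k)⟩

theorem Set.ncard_inter_Icc_one_le (A : Set ℕ) (a b c : ℕ) :
    (A ∩ Set.Icc 1 c).ncard ≤ a + (A ∩ Set.Ioc a b).ncard + (A ∩ Set.Ioc b c).ncard := by
  have hsub : A ∩ Set.Icc 1 c ⊆ Set.Icc 1 a ∪ (A ∩ Set.Ioc a b) ∪ (A ∩ Set.Ioc b c) := by
    rintro x ⟨hxA, hx1, hxc⟩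
    by_cases hxa : x ≤ a
    · exact Or.inl (Or.inl ⟨hx1, hxa⟩)
    by_cases hxb : x ≤ b
    · exact Or.inl (Or.inr ⟨hxA, by omega, hxb⟩)
    · exact Or.inr ⟨hxA, by omega, hxc⟩
  calc (A ∩ Set.Icc 1 c).ncard
      ≤ (Set.Icc 1 a ∪ (A ∩ Set.Ioc a b) ∪ (A ∩ Set.Ioc b c)).ncard := Set.ncard_le_ncard hsub
    _ ≤ (Set.Icc 1 a).ncard + (A ∩ Set.Ioc a b).ncard + (A ∩ Set.Ioc b c).ncard :=
      (Set.ncard_union_le _ _).trans (by grw [Set.ncard_union_le])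
    _ = a + (A ∩ Set.Ioc a b).ncard + (A ∩ Set.Ioc b c).ncard := by simp

def block (w : ℕ → ℕ) (j : ℕ) : Set ℕ := Set.Ioc (w j) (w (j + 1))

def SplitBy (w : ℕ → ℕ) (a b : ℕ) : Prop := ∃ i, a ≤ w i ∧ w i < b

open Classical in
/-- The partition type of `Z = {z₀ < ⋯ < z_{n-1}}` with respect to the blocks of `w`, encoded by its
cut positions: bit `k` is `1` iff `z_k` and `z_{k+1}` lie in different blocks. -/
noncomputable def cutPattern (w : ℕ → ℕ) (n : ℕ) (Z : Finset ℕ) : Fin (n - 1) → Fin 2 :=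
  if h : Z.card = n then fun k =>
    if SplitBy w (Z.orderEmbOfFin h ⟨k, by omega⟩) (Z.orderEmbOfFin h ⟨k + 1, by omega⟩) then 1
    else 0
  else 0

section Blocks

variable {w : ℕ → ℕ}

theorem SplitBy.lt {a b : ℕ} (h : SplitBy w a b) : a < b :=
  let ⟨_, hai, hib⟩ := h; hai.trans_lt hib

theorem exists_mem_block (hw : StrictMono w) {m v : ℕ} (hv : w m < v) :
    ∃ j, m ≤ j ∧ v ∈ block w j := by
  have hex : ∃ k, v ≤ w k := ⟨v, hw.le_apply⟩
  have hm : m < Nat.find hex := by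
    by_contra! h
    exact (hw.monotone h).not_gt ((Nat.find_spec hex).trans_lt' hv)
  obtain ⟨j, hj⟩ : ∃ j, Nat.find hex = j + 1 := ⟨Nat.find hex - 1, by omega⟩
  exact ⟨j, by omega, not_le.1 (Nat.find_min hex (by omega)), hj ▸ Nat.find_spec hex⟩

theorem splitBy_iff_of_mem_block (hw : StrictMono w) {J : ℕ → ℕ} (hJ : StrictMono J)
    {a b i j : ℕ} (ha : a ∈ block w (J i)) (hb : b ∈ block w (J j)) (hij : i ≤ j) :
    SplitBy w a b ↔ i < j := by
  refine ⟨fun ⟨k, hak, hkb⟩ => hij.lt_of_ne ?_, fun h => ⟨J i + 1, ha.2, ?_⟩⟩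
  · rintro rfl
    have : J i < k := hw.lt_iff_lt.1 (ha.1.trans_le hak)
    exact (hw.monotone this).not_gt (hkb.trans_le hb.2)
  · exact (hw.monotone (hJ h)).trans_lt hb.1

variable {n : ℕ} {φ : ℕ → ℕ} {A : Set ℕ}

theorem frequently_le_ncard_inter_block (hw : StrictMono w)
    (hφ : ∀ i, ∀ v ≥ w (i + 1), w i + 2 * n ≤ φ v) (hA : Packed φ A) :
    ∃ᶠ j in atTop, n ≤ (A ∩ block w j).ncard := by
  refine frequently_atTop.2 fun m => ?_
  obtain ⟨v, hv, hφv⟩ := hA (w (m + 1) + 1)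
  obtain ⟨j, hmj, hjv, hvj⟩ := exists_mem_block hw (m := m + 1) (v := v) (by omega)
  obtain ⟨i, rfl⟩ : ∃ i, j = i + 1 := ⟨j - 1, by omega⟩
  have key := calc
    w i + 2 * n ≤ φ v := hφ i v hjv.le
    _ ≤ (A ∩ Set.Icc 1 v).ncard := hφv
    _ ≤ (A ∩ Set.Icc 1 (w (i + 2))).ncard := Set.ncard_le_ncard (by gcongr)
    _ ≤ w i + (A ∩ block w i).ncard + (A ∩ block w (i + 1)).ncard :=
      Set.ncard_inter_Icc_one_le A _ _ _
  by_cases h : n ≤ (A ∩ block w i).ncard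
  · exact ⟨i, by omega, h⟩
  · exact ⟨i + 1, by omega, by omega⟩

variable {J : ℕ → ℕ}

theorem exists_orderEmbedding_mem_block (hw : StrictMono w) (hJ : StrictMono J)
    (hfat : ∀ t, n ≤ (A ∩ block w (J t)).ncard) {s : Fin n → ℕ} (hs : Monotone s) :
    ∃ f : Fin n ↪o ℕ, ∀ k, f k ∈ A ∩ block w (J (s k)) := by
  choose e he using fun t =>
    exists_orderEmbedding_fin_mem ((Set.finite_Ioc _ _).inter_of_right A) (hfat t)
  refine ⟨OrderEmbedding.ofStrictMono (fun k => e (s k) k) fun k k' hkk' => ?_,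
    fun k => he _ _⟩
  rcases (hs hkk'.le).lt_or_eq with hlt | heq
  · exact ((splitBy_iff_of_mem_block hw hJ (he _ k).2 (he _ k').2 (hs hkk'.le)).2 hlt).lt
  · simpa only [heq] using (e (s k')).strictMono hkk'

open Classical in
theorem cutPattern_map (f : Fin n ↪o ℕ) (k : Fin (n - 1)) :
    cutPattern w n (univ.map f.toEmbedding) k =
      if SplitBy w (f ⟨k, by omega⟩) (f ⟨k + 1, by omega⟩) then 1 else 0 := by
  have hcard : (univ.map f.toEmbedding).card = n := by simp
  have hf : f = (univ.map f.toEmbedding).orderEmbOfFin hcard :=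
    orderEmbOfFin_unique' hcard fun x => mem_map_of_mem _ (mem_univ x)
  rw [cutPattern, dif_pos hcard, ← hf]

theorem exists_cutPattern_eq (hw : StrictMono w) (hJ : StrictMono J)
    (hfat : ∀ t, n ≤ (A ∩ block w (J t)).ncard) (p : Fin (n - 1) → Fin 2) :
    ∃ Z : Finset ℕ, ↑Z ⊆ A ∧ Z.card = n ∧ cutPattern w n Z = p := by
  set q : ℕ → ℕ := fun i => if h : i < n - 1 then p ⟨i, h⟩ else 0
  set s : ℕ → ℕ := fun k => ∑ i ∈ range k, q i
  have hs : ∀ k, s (k + 1) = s k + q k := fun k => sum_range_succ _ _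
  have hsmono : Monotone s := monotone_nat_of_le_succ fun k => by rw [hs]; omega
  obtain ⟨f, hf⟩ := exists_orderEmbedding_mem_block hw hJ hfat (s := fun k => s k)
    (hsmono.comp Fin.val_strictMono.monotone)
  refine ⟨univ.map f.toEmbedding, ?_, by simp, funext fun k => ?_⟩
  · simpa using Set.range_subset_iff.2 fun k => (hf k).1
  rw [cutPattern_map, splitBy_iff_of_mem_block hw hJ (hf _).2 (hf _).2 (hsmono (by simp)),
    show s (k + 1) = s k + p k by simp [hs, q, k.2]]
  generalize p k = b
  fin_cases b <;> simp

end Blocks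

theorem stmt2_general (n : ℕ) (φ : ℕ → ℕ)
    (hlim : Tendsto φ atTop atTop) :
    ∃ g : Finset ℕ → Fin (2 ^ (n - 1)),
      ∀ A : Set ℕ, A.Infinite →
        (¬ Packed φ A) ∨
        Set.ncard {c : Fin (2 ^ (n - 1)) |
          ∃ Z : Finset ℕ, ↑Z ⊆ A ∧ Z.card = n ∧ g Z = c} = 2 ^ (n - 1) := by
  obtain ⟨w, hw, hφw⟩ := exists_strictMono_forall_succ (P := fun x y => ∀ v ≥ y, x + 2 * n ≤ φ v)
    fun x => eventually_forall_ge_atTop.2 (hlim.eventually_ge_atTop _)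
  refine ⟨fun Z => finFunctionFinEquiv (cutPattern w n Z), fun A _ => or_iff_not_imp_left.2
    fun hA => ?_⟩
  obtain ⟨J, hJ, hfat⟩ := extraction_of_frequently_atTop
    (frequently_le_ncard_inter_block hw hφw (not_not.1 hA))
  have hall : {c : Fin (2 ^ (n - 1)) | ∃ Z : Finset ℕ, ↑Z ⊆ A ∧ Z.card = n ∧
      finFunctionFinEquiv (cutPattern w n Z) = c} = Set.univ :=
    Set.eq_univ_of_forall fun c =>
      let ⟨Z, hZA, hZn, hZ⟩ := exists_cutPattern_eq hw hJ hfat (finFunctionFinEquiv.symm c)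
      ⟨Z, hZA, hZn, by rw [hZ, Equiv.apply_symm_apply]⟩
  rw [hall, Set.ncard_univ, Nat.card_eq_fintype_card, Fintype.card_fin]

theorem stmt2 (n : ℕ) (hn : 1 ≤ n) (φ : ℕ → ℕ)
    (hlim : Tendsto φ atTop atTop) :
    ∃ g : Finset ℕ → Fin (2 ^ (n - 1)),
      ∀ A : Set ℕ, A.Infinite →
        (¬ Packed φ A) ∨
        Set.ncard {c : Fin (2 ^ (n - 1)) |
          ∃ Z : Finset ℕ, ↑Z ⊆ A ∧ Z.card = n ∧ g Z = c} = 2 ^ (n - 1) :=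
  stmt2_general n φ hlim
end

section
/- Fix k ≥ 1 and a coloring f : [ℕ]² → Fin k together with φ : ℕ → ℕ satisfying w → (φ(w))²_{k+1} for all w. Then the full set ℕ is large, where L ⊆ ℕ is called large if for all m and p there exists w such that for every ρ : {1,…,w} → Fin p, there exists Y ⊆ (m,w] ∩ L with |Y| ≥ φ(w), Y homogeneous for f (f constant on [Y]²), and Y homogeneous for ρ (ρ constant on Y). -/
/-!
If `φ W > m + p` for some `W`, colour the pairs of `(0, W]` by `f` when they lie in `(m, W]` and
are `ρ`-monochromatic, and by an extra colour otherwise. A homogeneous set of size `φ W` cannot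
carry the extra colour, since `ρ` would then be injective on its part above `m`, leaving at most
`m + p` elements; so it is the required set. Otherwise `φ` is bounded and attains its maximum at
some `w`. By pigeonhole `(m, m + p w]` contains a `ρ`-monochromatic set of size `w`, and the arrow
at `w` yields inside it an `f`-homogeneous set of size `φ w ≥ φ (m + p w)`.
-/

/-- Finite Ramsey arrow for `n`-element subsets: `a → (b)ⁿ_c`. -/
def ArrowN (n a b c : ℕ) : Prop :=
  ∀ X : Finset ℕ, X.card = a → ∀ f : Finset ℕ → Fin c,
    ∃ Y ⊆ X, Y.card = b ∧ ∃ i : Fin c, ∀ Z ⊆ Y, Z.card = n → f Z = i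

/-- Largeness of `L ⊆ ℕ` relative to the instance `f, φ` of packed Ramsey's
theorem for pairs: for all `m, p` there is `w` such that for every
`ρ : {1,…,w} → Fin p` there is `Y ⊆ (m,w] ∩ L` with `|Y| ≥ φ w`,
`f` constant on `[Y]²`, and `ρ` constant on `Y`. -/
def Large2 (k : ℕ) (f : Finset ℕ → Fin k) (φ : ℕ → ℕ) (L : Set ℕ) : Prop :=
  ∀ m p : ℕ, ∃ w : ℕ, ∀ ρ : ℕ → Fin p,
    ∃ Y : Finset ℕ, ↑Y ⊆ Set.Ioc m w ∩ L ∧ φ w ≤ Y.card ∧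
      (∃ c : Fin k, ∀ Z ⊆ Y, Z.card = 2 → f Z = c) ∧
      (∃ i : Fin p, ∀ y ∈ Y, ρ y = i)

open Finset

def Large2At (k : ℕ) (f : Finset ℕ → Fin k) (φ : ℕ → ℕ) (L : Set ℕ) (m p w : ℕ) : Prop :=
  ∀ ρ : ℕ → Fin p,
    ∃ Y : Finset ℕ, ↑Y ⊆ Set.Ioc m w ∩ L ∧ φ w ≤ Y.card ∧
      (∃ c : Fin k, ∀ Z ⊆ Y, Z.card = 2 → f Z = c) ∧
      (∃ i : Fin p, ∀ y ∈ Y, ρ y = i)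

theorem ArrowN.of_le_colors {n a b c d : ℕ} (hcd : c ≤ d) (h : ArrowN n a b d) :
    ArrowN n a b c := by
  intro X hX f
  obtain ⟨Y, hYX, hY, i, hi⟩ := h X hX (fun Z => Fin.castLE hcd (f Z))
  refine ⟨Y, hYX, hY, ?_⟩
  by_cases hZ : ∃ Z ⊆ Y, Z.card = n
  · obtain ⟨Z₀, hZ₀, hZ₀n⟩ := hZ
    exact ⟨f Z₀, fun Z hZ hZn =>
      Fin.castLE_injective hcd ((hi Z hZ hZn).trans (hi Z₀ hZ₀ hZ₀n).symm)⟩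
  · exact ⟨f ∅, fun Z hZY hZn => absurd ⟨Z, hZY, hZn⟩ hZ⟩

section ExtraColor

variable {α : Type*} {k : ℕ} (P : Finset α → Prop) [DecidablePred P] (f : Finset α → Fin k)

def extraColor (Z : Finset α) : Fin (k + 1) :=
  if P Z then (f Z).castSucc else Fin.last k

variable {P f}

theorem forall_not_or_exists_of_extraColor_eq {n : ℕ} {Y : Finset α} {i : Fin (k + 1)}
    (hi : ∀ Z ⊆ Y, Z.card = n → extraColor P f Z = i) :
    (∀ Z ⊆ Y, Z.card = n → ¬ P Z) ∨ ∃ c, ∀ Z ⊆ Y, Z.card = n → P Z ∧ f Z = c := by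
  induction i using Fin.lastCases with
  | last =>
    refine .inl fun Z hZ hZn hP => Fin.castSucc_ne_last (f Z) ?_
    simpa [extraColor, hP] using hi Z hZ hZn
  | cast c =>
    refine .inr ⟨c, fun Z hZ hZn => ?_⟩
    have hZc := hi Z hZ hZn
    unfold extraColor at hZc
    split_ifs at hZc with hP
    · exact ⟨hP, Fin.castSucc_injective _ hZc⟩
    · exact absurd hZc.symm (Fin.castSucc_ne_last c)

end ExtraColor

theorem Finset.pair_of_forall_card_eq_two {α : Type*} [DecidableEq α] {Y : Finset α}
    {Q : Finset α → Prop} (h : ∀ Z ⊆ Y, Z.card = 2 → Q Z) {x y : α} (hx : x ∈ Y) (hy : y ∈ Y)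
    (hxy : x ≠ y) : Q {x, y} :=
  h _ (insert_subset hx (singleton_subset_iff.2 hy)) (card_pair hxy)

theorem card_le_add_of_injOn {p m W : ℕ} {Y : Finset ℕ} (hY : Y ⊆ Ioc 0 W) (ρ : ℕ → Fin p)
    (hinj : Set.InjOn ρ ↑(Y ∩ Ioc m W)) : Y.card ≤ m + p := by
  have hsplit : Y ⊆ Ioc 0 m ∪ Y ∩ Ioc m W := by
    intro y hy
    have := mem_Ioc.1 (hY hy)
    by_cases hym : y ≤ m
    · exact mem_union_left _ (mem_Ioc.2 ⟨this.1, hym⟩)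
    · exact mem_union_right _ (mem_inter.2 ⟨hy, mem_Ioc.2 ⟨by omega, this.2⟩⟩)
  have hhigh : (Y ∩ Ioc m W).card ≤ p := by
    simpa using card_le_card_of_injOn ρ (fun _ _ => mem_univ _) hinj
  calc Y.card ≤ (Ioc 0 m ∪ Y ∩ Ioc m W).card := card_le_card hsplit
    _ ≤ (Ioc 0 m).card + (Y ∩ Ioc m W).card := card_union_le _ _
    _ ≤ m + p := by simp only [Nat.card_Ioc, Nat.sub_zero]; omega

theorem large2At_of_lt {k : ℕ} (f : Finset ℕ → Fin k) {φ : ℕ → ℕ} {m p W : ℕ}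
    (hW : ArrowN 2 W (φ W) (k + 1)) (hmp : m + p < φ W) : Large2At k f φ Set.univ m p W := by
  classical
  intro ρ
  let P : Finset ℕ → Prop := fun Z => Z ⊆ Ioc m W ∧ ∃ j, ∀ z ∈ Z, ρ z = j
  have hP_pair : ∀ x y, P {x, y} ↔ x ∈ Ioc m W ∧ y ∈ Ioc m W ∧ ρ x = ρ y := by
    intro x y
    simp only [P, insert_subset_iff, singleton_subset_iff, mem_insert, mem_singleton,
      forall_eq_or_imp, forall_eq]
    constructor
    · rintro ⟨⟨hx, hy⟩, j, hxj, hyj⟩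
      exact ⟨hx, hy, hxj.trans hyj.symm⟩
    · rintro ⟨hx, hy, hxy⟩
      exact ⟨⟨hx, hy⟩, ρ x, rfl, hxy.symm⟩
  obtain ⟨Y, hYW, hY, i, hi⟩ := hW (Ioc 0 W) (by simp) (extraColor P f)
  rcases forall_not_or_exists_of_extraColor_eq hi with hbad | ⟨c, hgood⟩
  · have hinj : Set.InjOn ρ ↑(Y ∩ Ioc m W) := by
      intro x hx y hy hxy
      simp only [coe_inter, Set.mem_inter_iff, mem_coe] at hx hy
      by_contra hne
      exact pair_of_forall_card_eq_two hbad hx.1 hy.1 hne ((hP_pair x y).2 ⟨hx.2, hy.2, hxy⟩)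
    have := card_le_add_of_injOn hYW ρ hinj
    omega
  have hgood_pair : ∀ x ∈ Y, ∀ y ∈ Y, x ≠ y → x ∈ Ioc m W ∧ y ∈ Ioc m W ∧ ρ x = ρ y :=
    fun x hx y hy hxy =>
      (hP_pair x y).1 (pair_of_forall_card_eq_two (fun Z hZ hZ2 => (hgood Z hZ hZ2).1) hx hy hxy)
  have hY2 : 1 < Y.card := by have := (ρ 0).pos; omega
  obtain ⟨y₀, hy₀⟩ := card_pos.1 (by omega : 0 < Y.card)
  refine ⟨Y, fun y hy => ⟨?_, trivial⟩, hY.ge, ⟨c, fun Z hZ hZ2 => (hgood Z hZ hZ2).2⟩,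
    ρ y₀, fun y hy => ?_⟩
  · obtain ⟨z, hz, hzy⟩ := exists_mem_ne hY2 y
    simpa using (hgood_pair y hy z hz hzy.symm).1
  · rcases eq_or_ne y y₀ with rfl | hne
    · rfl
    · exact (hgood_pair y hy y₀ hy₀ hne).2.2

theorem large2At_of_forall_le {k : ℕ} (f : Finset ℕ → Fin k) {φ : ℕ → ℕ} {w : ℕ}
    (hw : ArrowN 2 w (φ w) k) (hmax : ∀ v, φ v ≤ φ w) (m p : ℕ) :
    Large2At k f φ Set.univ m p (m + p * w) := by
  classical
  intro ρ
  obtain ⟨i, -, hfiber⟩ := exists_le_card_fiber_of_mul_le_card_of_maps_to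
    (s := Ioc m (m + p * w)) (f := ρ) (n := w) (fun _ _ => mem_univ _) ⟨ρ 0, mem_univ _⟩
    (by simp)
  obtain ⟨X, hX, hXw⟩ := exists_subset_card_eq hfiber
  obtain ⟨Y, hYX, hY, c, hc⟩ := hw X hXw f
  have hYfiber : ∀ y ∈ Y, y ∈ Ioc m (m + p * w) ∧ ρ y = i :=
    fun y hy => mem_filter.1 (hX (hYX hy))
  exact ⟨Y, fun y hy => ⟨by simpa using (hYfiber y hy).1, trivial⟩, hY ▸ hmax _, ⟨c, hc⟩, i,
    fun y hy => (hYfiber y hy).2⟩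

theorem exists_forall_le_of_forall_le {ι : Type*} [Nonempty ι] {φ : ι → ℕ} {B : ℕ}
    (h : ∀ v, φ v ≤ B) :
    ∃ w, ∀ v, φ v ≤ φ w := by
  obtain ⟨_, ⟨w, rfl⟩, hw⟩ := BddAbove.exists_isGreatest_of_nonempty
    ⟨B, Set.forall_mem_range.2 h⟩ (Set.range_nonempty φ)
  exact ⟨w, Set.forall_mem_range.1 hw⟩

theorem stmt4_general (k : ℕ) (f : Finset ℕ → Fin k) (φ : ℕ → ℕ)
    (hφ : ∀ w, ArrowN 2 w (φ w) (k + 1)) :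
    Large2 k f φ Set.univ := by
  intro m p
  by_cases hbig : ∃ W, m + p < φ W
  · obtain ⟨W, hW⟩ := hbig
    exact ⟨W, large2At_of_lt f (hφ W) hW⟩
  · push Not at hbig
    obtain ⟨w, hw⟩ := exists_forall_le_of_forall_le hbig
    exact ⟨m + p * w, large2At_of_forall_le f ((hφ w).of_le_colors k.le_succ) hw m p⟩

theorem stmt4 (k : ℕ) (hk : 1 ≤ k) (f : Finset ℕ → Fin k) (φ : ℕ → ℕ)
    (hφ : ∀ w, ArrowN 2 w (φ w) (k + 1)) :
    Large2 k f φ Set.univ :=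
  stmt4_general k f φ hφ
end

section
/- Fix k ≥ 1, a coloring f : [ℕ]² → Fin k, and φ : ℕ → ℕ satisfying w → (φ(w))²_{k+1} for all w. With 'large' as defined relative to this instance, the union of two small (i.e., not large) subsets of ℕ is small. Consequently, if a large set L is partitioned into finitely many pieces L = L₁ ∪ ⋯ ∪ L_s, then at least one L_i is large. -/
open Set

namespace Large2

variable {k : ℕ} {f : Finset ℕ → Fin k} {φ : ℕ → ℕ}

theorem exists_of_fintype {L : Set ℕ} (h : Large2 k f φ L) (m : ℕ) (α : Type*) [Fintype α] :
    ∃ w : ℕ, ∀ ρ : ℕ → α,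
      ∃ Y : Finset ℕ, ↑Y ⊆ Ioc m w ∩ L ∧ φ w ≤ Y.card ∧
        (∃ c : Fin k, ∀ Z ⊆ Y, Z.card = 2 → f Z = c) ∧ (∃ a : α, ∀ y ∈ Y, ρ y = a) := by
  obtain ⟨w, hw⟩ := h m (Fintype.card α)
  refine ⟨w, fun ρ => ?_⟩
  obtain ⟨Y, hY, hcard, hf, i, hi⟩ := hw (Fintype.equivFin α ∘ ρ)
  exact ⟨Y, hY, hcard, hf, (Fintype.equivFin α).symm i, fun y hy => by simp [← hi y hy]⟩

/-- Colour `x` by `ρ₁ x` if `x ∈ S₁` and by `ρ₂ x` otherwise, the two palettes being disjoint: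
a homogeneous set in `S₁ ∪ S₂` then lies in `S₁` or in `S₂` and is homogeneous for the
corresponding colouring. -/
theorem of_union {S₁ S₂ : Set ℕ} (h : Large2 k f φ (S₁ ∪ S₂)) :
    Large2 k f φ S₁ ∨ Large2 k f φ S₂ := by
  classical
  by_contra! ⟨h₁, h₂⟩
  simp only [Large2] at h₁ h₂
  push Not at h₁ h₂
  obtain ⟨m₁, p₁, h₁⟩ := h₁
  obtain ⟨m₂, p₂, h₂⟩ := h₂
  obtain ⟨w, hw⟩ := h.exists_of_fintype (max m₁ m₂) (Fin p₁ ⊕ Fin p₂)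
  obtain ⟨ρ₁, hρ₁⟩ := h₁ w
  obtain ⟨ρ₂, hρ₂⟩ := h₂ w
  obtain ⟨Y, hY, hcard, hf, c, hc⟩ :=
    hw fun x => if x ∈ S₁ then .inl (ρ₁ x) else .inr (ρ₂ x)
  have hIoc : ∀ {m}, m ≤ max m₁ m₂ → ∀ y ∈ Y, y ∈ Ioc m w :=
    fun hm y hy => Ioc_subset_Ioc_left hm (hY hy).1
  cases c with
  | inl j =>
    have hS₁ : ∀ y ∈ Y, y ∈ S₁ ∧ ρ₁ y = j := fun y hy => by
      have hy' := hc y hy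
      split_ifs at hy' with hy₁
      exact ⟨hy₁, Sum.inl_injective hy'⟩
    obtain ⟨y, hy, hne⟩ := hρ₁ Y
      (fun y hy => ⟨hIoc (le_max_left _ _) y hy, (hS₁ y hy).1⟩) hcard hf j
    exact hne (hS₁ y hy).2
  | inr j =>
    have hS₂ : ∀ y ∈ Y, y ∈ S₂ ∧ ρ₂ y = j := fun y hy => by
      have hy' := hc y hy
      split_ifs at hy' with hy₁
      exact ⟨(hY hy).2.resolve_left hy₁, Sum.inr_injective hy'⟩
    obtain ⟨y, hy, hne⟩ := hρ₂ Y
      (fun y hy => ⟨hIoc (le_max_right _ _) y hy, (hS₂ y hy).1⟩) hcard hf j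
    exact hne (hS₂ y hy).2

theorem exists_of_biUnion {ι : Type*} {s : Finset ι} (hs : s.Nonempty) {L : ι → Set ℕ}
    (h : Large2 k f φ (⋃ i ∈ s, L i)) : ∃ i ∈ s, Large2 k f φ (L i) := by
  classical
  induction hs using Finset.Nonempty.cons_induction with
  | singleton a => exact ⟨a, by simpa using h⟩
  | cons a s _ _ ih =>
    rw [Finset.cons_eq_insert, Finset.set_biUnion_insert] at h
    rcases h.of_union with ha | hs
    · exact ⟨a, by simp, ha⟩
    · obtain ⟨i, hi, hL⟩ := ih hs
      exact ⟨i, by simp [hi], hL⟩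

theorem exists_of_iUnion {ι : Type*} [Fintype ι] [Nonempty ι] {L : ι → Set ℕ}
    (h : Large2 k f φ (⋃ i, L i)) : ∃ i, Large2 k f φ (L i) := by
  obtain ⟨i, -, hi⟩ := exists_of_biUnion Finset.univ_nonempty (L := L) (by simpa using h)
  exact ⟨i, hi⟩

end Large2

theorem stmt5_general (k : ℕ) (f : Finset ℕ → Fin k) (φ : ℕ → ℕ) :
    (∀ S₁ S₂ : Set ℕ, ¬ Large2 k f φ S₁ → ¬ Large2 k f φ S₂ →
      ¬ Large2 k f φ (S₁ ∪ S₂)) ∧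
    (∀ (s : ℕ), 1 ≤ s → ∀ L : Fin s → Set ℕ,
      Large2 k f φ (⋃ i, L i) → ∃ i, Large2 k f φ (L i)) := by
  refine ⟨fun S₁ S₂ h₁ h₂ h => h.of_union.elim h₁ h₂, fun s hs L h => ?_⟩
  have : Nonempty (Fin s) := Fin.pos_iff_nonempty.mp hs
  exact Large2.exists_of_iUnion h

theorem stmt5 (k : ℕ) (hk : 1 ≤ k) (f : Finset ℕ → Fin k) (φ : ℕ → ℕ)
    (hφ : ∀ w, ArrowN 2 w (φ w) (k + 1)) :
    (∀ S₁ S₂ : Set ℕ, ¬ Large2 k f φ S₁ → ¬ Large2 k f φ S₂ →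
      ¬ Large2 k f φ (S₁ ∪ S₂)) ∧
    (∀ (s : ℕ), 1 ≤ s → ∀ L : Fin s → Set ℕ,
      Large2 k f φ (⋃ i, L i) → ∃ i, Large2 k f φ (L i)) :=
  stmt5_general k f φ
end

section
/- Fix n ≥ 2, k ≥ 1, f : [ℕ]ⁿ → Fin k, and φ with w → (φ(w))ⁿ_{k+1} for all w and liminf φ = ∞. With largeness defined for subsets of [ℕ]^{n-1} relative to this instance, the union of any two small subsets of [ℕ]^{n-1} is small; hence any finite partition of a large subset of [ℕ]^{n-1} contains a large piece. -/
/-- Largeness of `L ⊆ [ℕ]^{n-1}` relative to the instance `f, φ` of packed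
Ramsey's theorem for exponent `n`.  The helper exponents `a_i` are the first
entries of the compositions of `n` of length `> 1`; here we index the helper
colorings directly by the compositions.  `L` is large if for every `m` and
every assignment of numbers of colors `p c` there is a `w` such that for all
colorings `ρ c : [{1,…,w}]^{(c.blocks).headI} → Fin (p c)` there is
`Y ⊆ (m,w]` with `[Y]^{n-1} ⊆ L`, `|Y| ≥ φ w`, `Y` homogeneous for `f` and for
each `ρ c` with `c` of length `> 1`. -/
def LargeN (n k : ℕ) (f : Finset ℕ → Fin k) (φ : ℕ → ℕ)
    (L : Set (Finset ℕ)) : Prop :=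
  ∀ (m : ℕ) (p : Composition n → ℕ), ∃ w : ℕ,
    ∀ ρ : (c : Composition n) → Finset ℕ → Fin (p c),
      ∃ Y : Finset ℕ, ↑Y ⊆ Set.Ioc m w ∧
        (∀ Z ⊆ Y, Z.card = n - 1 → Z ∈ L) ∧
        φ w ≤ Y.card ∧
        (∃ i : Fin k, ∀ Z ⊆ Y, Z.card = n → f Z = i) ∧
        (∀ c : Composition n, 1 < c.length →
          ∃ i : Fin (p c), ∀ Z ⊆ Y, Z.card = c.blocks.headI → ρ c Z = i)

open Finset

variable {α β : Type*}

def IsHomogeneousOn (χ : Finset ℕ → α) (r : ℕ) (Y : Finset ℕ) : Prop :=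
  ∃ i, ∀ Z ⊆ Y, Z.card = r → χ Z = i

lemma IsHomogeneousOn.comp {χ : Finset ℕ → α} {r : ℕ} {Y : Finset ℕ}
    (h : IsHomogeneousOn χ r Y) (g : α → β) : IsHomogeneousOn (g ∘ χ) r Y :=
  let ⟨i, hi⟩ := h
  ⟨g i, fun Z hZ hcard => congrArg g (hi Z hZ hcard)⟩

lemma IsHomogeneousOn.forall_mem_or_forall_not_mem {S : Set (Finset ℕ)} [DecidablePred (· ∈ S)]
    {r : ℕ} {Y : Finset ℕ} (h : IsHomogeneousOn (fun Z => if Z ∈ S then (0 : Fin 2) else 1) r Y) :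
    (∀ Z ⊆ Y, Z.card = r → Z ∈ S) ∨ (∀ Z ⊆ Y, Z.card = r → Z ∉ S) := by
  obtain ⟨i, hi⟩ := h
  by_cases h0 : i = 0
  · refine .inl fun Z hZ hcard => ?_
    simpa [h0] using (hi Z hZ hcard).symm
  · refine .inr fun Z hZ hcard hZS => h0 ?_
    simpa [hZS] using (hi Z hZ hcard).symm

def Composition.predOne (n : ℕ) (hn : 2 ≤ n) : Composition n :=
  ⟨[n - 1, 1], by intro i hi; simp at hi; omega, by simp; omega⟩

lemma Composition.one_lt_length_predOne (n : ℕ) (hn : 2 ≤ n) :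
    1 < (Composition.predOne n hn).length := by
  simp [Composition.predOne, Composition.length]

section Largeness

variable {n k : ℕ} {f : Finset ℕ → Fin k} {φ : ℕ → ℕ}

lemma not_largeN_union (hn : 2 ≤ n) {S₁ S₂ : Set (Finset ℕ)}
    (h₁ : ¬ LargeN n k f φ S₁) (h₂ : ¬ LargeN n k f φ S₂) :
    ¬ LargeN n k f φ (S₁ ∪ S₂) := by
  classical
  intro hL
  simp only [LargeN, not_forall, not_exists] at h₁ h₂
  obtain ⟨m₁, p₁, h₁⟩ := h₁
  obtain ⟨m₂, p₂, h₂⟩ := h₂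
  obtain ⟨w, hw⟩ := hL (max m₁ m₂) (fun c => p₁ c * p₂ c * 2)
  obtain ⟨ρ₁, hρ₁⟩ := h₁ w
  obtain ⟨ρ₂, hρ₂⟩ := h₂ w
  let ρ : (c : Composition n) → Finset ℕ → Fin (p₁ c * p₂ c * 2) := fun c Z =>
    finProdFinEquiv (finProdFinEquiv (ρ₁ c Z, ρ₂ c Z), if Z ∈ S₁ then (0 : Fin 2) else 1)
  obtain ⟨Y, hYI, hYL, hYφ, hYf, hYρ⟩ := hw ρ
  have hρ₁Y : ∀ c : Composition n, 1 < c.length →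
      IsHomogeneousOn (ρ₁ c) c.blocks.headI Y := fun c hc => by
    convert IsHomogeneousOn.comp (hYρ c hc)
      fun i => (finProdFinEquiv.symm (finProdFinEquiv.symm i).1).1
    funext Z; simp only [ρ, Function.comp_apply, Equiv.symm_apply_apply]
  have hρ₂Y : ∀ c : Composition n, 1 < c.length →
      IsHomogeneousOn (ρ₂ c) c.blocks.headI Y := fun c hc => by
    convert IsHomogeneousOn.comp (hYρ c hc)
      fun i => (finProdFinEquiv.symm (finProdFinEquiv.symm i).1).2
    funext Z; simp only [ρ, Function.comp_apply, Equiv.symm_apply_apply]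
  have hχ : IsHomogeneousOn (fun Z => if Z ∈ S₁ then (0 : Fin 2) else 1) (n - 1) Y := by
    convert IsHomogeneousOn.comp (hYρ _ (Composition.one_lt_length_predOne n hn))
      (fun i => (finProdFinEquiv.symm i).2) using 1
    · funext Z; simp only [ρ, Function.comp_apply, Equiv.symm_apply_apply]
    · rfl
  rcases hχ.forall_mem_or_forall_not_mem with hS | hS
  · exact hρ₁ Y ⟨fun x hx => ⟨(le_max_left _ _).trans_lt (hYI hx).1, (hYI hx).2⟩,
      hS, hYφ, hYf, hρ₁Y⟩
  · exact hρ₂ Y ⟨fun x hx => ⟨(le_max_right _ _).trans_lt (hYI hx).1, (hYI hx).2⟩,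
      fun Z hZ hcard => (hYL Z hZ hcard).resolve_left (hS Z hZ hcard), hYφ, hYf, hρ₂Y⟩

lemma LargeN.exists_largeN_of_biUnion (hn : 2 ≤ n) {ι : Type*} {L : ι → Set (Finset ℕ)}
    {s : Finset ι} (hs : s.Nonempty) (hL : LargeN n k f φ (⋃ i ∈ s, L i)) :
    ∃ i ∈ s, LargeN n k f φ (L i) := by
  classical
  induction hs using Finset.Nonempty.cons_induction with
  | singleton a => exact ⟨a, mem_singleton_self a, by simpa using hL⟩
  | cons a s _ _ ih =>
    rw [cons_eq_insert, set_biUnion_insert] at hL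
    by_cases ha : LargeN n k f φ (L a)
    · exact ⟨a, mem_cons_self a s, ha⟩
    · have hs : LargeN n k f φ (⋃ i ∈ s, L i) := by
        by_contra hs
        exact not_largeN_union hn ha hs hL
      obtain ⟨i, hi, hLi⟩ := ih hs
      exact ⟨i, mem_cons.2 (.inr hi), hLi⟩

end Largeness

theorem stmt8_general (n k : ℕ) (hn : 2 ≤ n)
    (f : Finset ℕ → Fin k) (φ : ℕ → ℕ) :
    (∀ S₁ S₂ : Set (Finset ℕ), ¬ LargeN n k f φ S₁ → ¬ LargeN n k f φ S₂ →
      ¬ LargeN n k f φ (S₁ ∪ S₂)) ∧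
    (∀ (s : ℕ), 1 ≤ s → ∀ L : Fin s → Set (Finset ℕ),
      LargeN n k f φ (⋃ i, L i) → ∃ i, LargeN n k f φ (L i)) := by
  refine ⟨fun S₁ S₂ => not_largeN_union hn, fun s hs L hL => ?_⟩
  have : NeZero s := ⟨by omega⟩
  obtain ⟨i, -, hi⟩ :=
    LargeN.exists_largeN_of_biUnion hn univ_nonempty (by simpa using hL)
  exact ⟨i, hi⟩

theorem stmt8 (n k : ℕ) (hn : 2 ≤ n) (hk : 1 ≤ k)
    (f : Finset ℕ → Fin k) (φ : ℕ → ℕ)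
    (hφ : ∀ w, ArrowN n w (φ w) (k + 1))
    (hlim : Filter.Tendsto φ Filter.atTop Filter.atTop) :
    (∀ S₁ S₂ : Set (Finset ℕ), ¬ LargeN n k f φ S₁ → ¬ LargeN n k f φ S₂ →
      ¬ LargeN n k f φ (S₁ ∪ S₂)) ∧
    (∀ (s : ℕ), 1 ≤ s → ∀ L : Fin s → Set (Finset ℕ),
      LargeN n k f φ (⋃ i, L i) → ∃ i, LargeN n k f φ (L i)) :=
  stmt8_general n k hn f φ
end

section
/- Fix n ≥ 2, k ≥ 1, f : [ℕ]ⁿ → Fin k, and φ with w → (φ(w))ⁿ_{k+1} for all w and liminf φ = ∞. If L ⊆ [ℕ]^{n-1} is large, p ≤ n-1, and h : [ℕ]^p → Fin s is any coloring, then the set {Z ∈ L : h is constant on [Z]^p} is large. -/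
/-! A coloring `h` of `[ℕ]^p` with `0 < p < n` is absorbed into the helper coloring attached
to the composition `n = p + (n - p)`: feeding the largeness of `L` the product colorings
`(ρ c, h)`, with `s` times as many colors, yields sets `Y` homogeneous for each `ρ c` and for
`h` at once. For `p = 0` there is nothing to prove. -/

open Finset

def IsHomogeneous {α : Type*} (g : Finset ℕ → α) (a : ℕ) (Y : Finset ℕ) : Prop :=
  ∃ i, ∀ Z ⊆ Y, Z.card = a → g Z = i

namespace IsHomogeneous

variable {α β : Type*} {g : Finset ℕ → α} {a : ℕ} {Y Y' : Finset ℕ}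

theorem mono (hY : IsHomogeneous g a Y) (h : Y' ⊆ Y) : IsHomogeneous g a Y' :=
  let ⟨i, hi⟩ := hY
  ⟨i, fun Z hZ => hi Z (hZ.trans h)⟩

theorem comp (hY : IsHomogeneous g a Y) (u : α → β) : IsHomogeneous (u ∘ g) a Y :=
  let ⟨i, hi⟩ := hY
  ⟨u i, fun Z hZ hc => congrArg u (hi Z hZ hc)⟩

end IsHomogeneous

theorem isHomogeneous_zero {α : Type*} (g : Finset ℕ → α) (Y : Finset ℕ) :
    IsHomogeneous g 0 Y :=
  ⟨g ∅, fun Z _ hZ => by rw [card_eq_zero.mp hZ]⟩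

def Composition.twoBlocks (n p : ℕ) (hp : 0 < p) (hpn : p < n) : Composition n :=
  ⟨[p, n - p], by simp only [List.mem_cons, List.not_mem_nil, or_false]; omega,
    by simp only [List.sum_cons, List.sum_nil]; omega⟩

section LargeN

variable {n k : ℕ} {f : Finset ℕ → Fin k} {φ : ℕ → ℕ} {L : Set (Finset ℕ)}

theorem LargeN.mono {L' : Set (Finset ℕ)} (hL : LargeN n k f φ L) (hLL' : L ⊆ L') :
    LargeN n k f φ L' := by
  intro m q
  obtain ⟨w, hw⟩ := hL m q
  refine ⟨w, fun ρ => ?_⟩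
  obtain ⟨Y, hYw, hYL, hYcard, hf, hρ⟩ := hw ρ
  exact ⟨Y, hYw, fun Z hZ hc => hLL' (hYL Z hZ hc), hYcard, hf, hρ⟩

theorem LargeN.inter_isHomogeneous (hL : LargeN n k f φ L) (c₀ : Composition n)
    (hc₀ : 1 < c₀.length) {s : ℕ} (h : Finset ℕ → Fin s) :
    LargeN n k f φ {Z | Z ∈ L ∧ IsHomogeneous h c₀.blocks.headI Z} := by
  intro m q
  obtain ⟨w, hw⟩ := hL m fun c => q c * s
  refine ⟨w, fun ρ => ?_⟩
  obtain ⟨Y, hYw, hYL, hYcard, hf, hρ⟩ := hw fun c Z => finProdFinEquiv (ρ c Z, h Z)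
  have unpack (c : Composition n) (hc : 1 < c.length) :
      IsHomogeneous (fun Z => (ρ c Z, h Z)) c.blocks.headI Y := by
    simpa only [Function.comp_def, Equiv.symm_apply_apply] using
      IsHomogeneous.comp (hρ c hc) finProdFinEquiv.symm
  exact ⟨Y, hYw, fun Z hZ hc => ⟨hYL Z hZ hc, ((unpack c₀ hc₀).comp Prod.snd).mono hZ⟩,
    hYcard, hf, fun c hc => (unpack c hc).comp Prod.fst⟩

end LargeN

theorem stmt9_general (n k : ℕ)
    (f : Finset ℕ → Fin k) (φ : ℕ → ℕ)
    (L : Set (Finset ℕ)) (hL : LargeN n k f φ L)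
    (p : ℕ) (hp : p ≤ n - 1) (s : ℕ) (h : Finset ℕ → Fin s) :
    LargeN n k f φ
      {Z : Finset ℕ | Z ∈ L ∧ ∃ i : Fin s, ∀ D ⊆ Z, D.card = p → h D = i} := by
  rcases Nat.eq_zero_or_pos p with rfl | hp0
  · exact hL.mono fun Z hZ => ⟨hZ, isHomogeneous_zero h Z⟩
  · exact hL.inter_isHomogeneous (Composition.twoBlocks n p hp0 (by omega)) Nat.one_lt_two h

theorem stmt9 (n k : ℕ) (hn : 2 ≤ n) (hk : 1 ≤ k)
    (f : Finset ℕ → Fin k) (φ : ℕ → ℕ)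
    (hφ : ∀ w, ArrowN n w (φ w) (k + 1))
    (hlim : Filter.Tendsto φ Filter.atTop Filter.atTop)
    (L : Set (Finset ℕ)) (hL : LargeN n k f φ L)
    (p : ℕ) (hp : p ≤ n - 1) (s : ℕ) (h : Finset ℕ → Fin s) :
    LargeN n k f φ
      {Z : Finset ℕ | Z ∈ L ∧ ∃ i : Fin s, ∀ D ⊆ Z, D.card = p → h D = i} :=
  stmt9_general n k f φ L hL p hp s h
end

section
/- Fix n ≥ 2, k ≥ 1, a coloring f : [ℕ]ⁿ → Fin k, an order function φ with w → (φ(w))ⁿ_{k+1} for all w, and let g : [ℕ]ⁿ → S be the partition-type coloring with all-colors-on-packed-sets property. Define h(Z) = f(Z) if g(Z) = (1,…,1), and h(Z) = g(Z) otherwise (viewing the codomain as the disjoint union (S ∖ {(1,…,1)}) ⊔ Fin k). If A is semi-homogeneous for h (at most 2^{n-1} colors on [A]ⁿ) and packed for φ, then there is a unique color ĉ ∈ Fin k such that f(X) = ĉ for every X ∈ [A]ⁿ with g(X) = (1,…,1). -/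
theorem Set.subsingleton_preimage_inr_of_ncard_le {α β : Type*} [Fintype α]
    {C : Set (α ⊕ β)} (hfin : C.Finite) {a : α} (hinl : ∀ c ≠ a, Sum.inl c ∈ C)
    (hcard : C.ncard ≤ Fintype.card α) : (Sum.inr ⁻¹' C).Subsingleton := by
  intro x hx y hy
  by_contra hxy
  have hsub : Sum.inl '' {a}ᶜ ∪ {Sum.inr x, Sum.inr y} ⊆ C := by
    rintro c (⟨d, hd, rfl⟩ | hc)
    · exact hinl d hd
    · rcases hc with rfl | rfl <;> assumption
  have hdisj : Disjoint (Sum.inl '' ({a}ᶜ : Set α)) ({Sum.inr x, Sum.inr y} : Set (α ⊕ β)) := by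
    rw [Set.disjoint_left]
    rintro _ ⟨d, -, rfl⟩ (h | h) <;> simp at h
  have hinl_card : (Sum.inl '' ({a}ᶜ : Set α) : Set (α ⊕ β)).ncard = Fintype.card α - 1 := by
    rw [Set.ncard_image_of_injective _ Sum.inl_injective, Set.ncard_compl, Set.ncard_singleton,
      Nat.card_eq_fintype_card]
  have hpair : ({Sum.inr x, Sum.inr y} : Set (α ⊕ β)).ncard = 2 :=
    Set.ncard_pair (by simpa using hxy)
  have hle := Set.ncard_le_ncard hsub hfin
  rw [Set.ncard_union_eq hdisj (Set.toFinite _) (Set.toFinite _), hinl_card, hpair] at hle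
  have : 0 < Fintype.card α := Fintype.card_pos_iff.mpr ⟨a⟩
  omega

theorem stmt13_general (n k : ℕ)
    (f : Finset ℕ → Fin k) (φ : ℕ → ℕ)
    -- the partition-type coloring `g`, assigning all `2^(n-1)` types on any packed set
    (g : Finset ℕ → Composition n)
    (hg : ∀ A : Set ℕ, Packed φ A → ∀ c : Composition n,
      ∃ X : Finset ℕ, ↑X ⊆ A ∧ X.card = n ∧ g X = c)
    -- the combined coloring `h` into `(S ∖ {(1,…,1)}) ⊔ Fin k`
    (h : Finset ℕ → (Composition n ⊕ Fin k))
    (hh : ∀ Z : Finset ℕ, Z.card = n →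
      (g Z = Composition.ones n → h Z = Sum.inr (f Z)) ∧
      (g Z ≠ Composition.ones n → h Z = Sum.inl (g Z)))
    (A : Set ℕ) (hA : Packed φ A)
    -- `A` is semi-homogeneous for `h`: at most `2^(n-1)` colors on `[A]ⁿ`
    (hsemi : Set.ncard {c : Composition n ⊕ Fin k |
      ∃ Z : Finset ℕ, ↑Z ⊆ A ∧ Z.card = n ∧ h Z = c} ≤ 2 ^ (n - 1)) :
    ∃! chat : Fin k, ∀ X : Finset ℕ, ↑X ⊆ A → X.card = n →
      g X = Composition.ones n → f X = chat := by
  set C := {c : Composition n ⊕ Fin k | ∃ Z : Finset ℕ, ↑Z ⊆ A ∧ Z.card = n ∧ h Z = c}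
  have hinl : ∀ c ≠ Composition.ones n, Sum.inl c ∈ C := fun c hc ↦ by
    obtain ⟨Z, hZA, hZn, rfl⟩ := hg A hA c
    exact ⟨Z, hZA, hZn, (hh Z hZn).2 hc⟩
  have hinr : ∀ X : Finset ℕ, ↑X ⊆ A → X.card = n → g X = Composition.ones n →
      f X ∈ Sum.inr ⁻¹' C :=
    fun X hXA hXn hXg ↦ ⟨X, hXA, hXn, (hh X hXn).1 hXg⟩
  have hunique : (Sum.inr ⁻¹' C).Subsingleton :=
    Set.subsingleton_preimage_inr_of_ncard_le (Set.toFinite C) hinl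
      (by rwa [composition_card])
  obtain ⟨X₀, hX₀A, hX₀n, hX₀g⟩ := hg A hA (Composition.ones n)
  exact ⟨f X₀, fun X hXA hXn hXg ↦ hunique (hinr X hXA hXn hXg) (hinr X₀ hX₀A hX₀n hX₀g),
    fun c hc ↦ (hc X₀ hX₀A hX₀n hX₀g).symm⟩

theorem stmt13 (n k : ℕ) (hn : 2 ≤ n) (hk : 1 ≤ k)
    (f : Finset ℕ → Fin k) (φ : ℕ → ℕ)
    (hmono : Monotone φ) (hunb : ∀ b, ∃ v, b ≤ φ v)
    (harrow : ∀ w, ArrowN n w (φ w) (k + 1))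
    -- the partition-type coloring `g`, assigning all `2^(n-1)` types on any packed set
    (g : Finset ℕ → Composition n)
    (hg : ∀ A : Set ℕ, Packed φ A → ∀ c : Composition n,
      ∃ X : Finset ℕ, ↑X ⊆ A ∧ X.card = n ∧ g X = c)
    -- the combined coloring `h` into `(S ∖ {(1,…,1)}) ⊔ Fin k`
    (h : Finset ℕ → (Composition n ⊕ Fin k))
    (hh : ∀ Z : Finset ℕ, Z.card = n →
      (g Z = Composition.ones n → h Z = Sum.inr (f Z)) ∧
      (g Z ≠ Composition.ones n → h Z = Sum.inl (g Z)))
    (A : Set ℕ) (hA : Packed φ A)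
    -- `A` is semi-homogeneous for `h`: at most `2^(n-1)` colors on `[A]ⁿ`
    (hsemi : Set.ncard {c : Composition n ⊕ Fin k |
      ∃ Z : Finset ℕ, ↑Z ⊆ A ∧ Z.card = n ∧ h Z = c} ≤ 2 ^ (n - 1)) :
    ∃! chat : Fin k, ∀ X : Finset ℕ, ↑X ⊆ A → X.card = n →
      g X = Composition.ones n → f X = chat :=
  stmt13_general n k f φ g hg h hh A hA hsemi
end

section
/- Let k ≥ 1, φ : ℕ → ℕ non-decreasing and unbounded with w → (φ(w))¹_{k+1} for all w, and f : ℕ → Fin k. Suppose (w_i) is defined by w₀ = 1 and w_{i+1} = the least w > w_i with (w - w_i) → (φ(w))¹_k. Then for each i there exists Y_i ⊆ (w_i, w_{i+1}] with |Y_i| ≥ φ(w_{i+1}) on which f is constant; moreover, if H ⊆ ℕ is infinite and the induced coloring i ↦ (the f-value on Y_i) is constant on H, then A = ⋃_{i∈H} Y_i is homogeneous for f and satisfies |A ∩ {1,…,w_i}| ≥ φ(w_i) for all i ∈ H. -/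
theorem Arrow1.exists_subset_Ioc {a b m c : ℕ} (h : Arrow1 (b - a) m c) (f : ℕ → Fin c) :
    ∃ Y : Finset ℕ, ↑Y ⊆ Set.Ioc a b ∧ Y.card = m ∧ ∃ i : Fin c, ∀ y ∈ Y, f y = i := by
  obtain ⟨Y, hY, hcard, hconst⟩ := h (Finset.Ioc a b) (Nat.card_Ioc a b) f
  exact ⟨Y, by simpa using Finset.coe_subset.2 hY, hcard, hconst⟩

theorem Finset.card_le_ncard_inter_Icc_one {A : Set ℕ} {Y : Finset ℕ} {a b : ℕ}
    (hYA : ↑Y ⊆ A) (hY : ↑Y ⊆ Set.Ioc a b) : Y.card ≤ (A ∩ Set.Icc 1 b).ncard := by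
  have hIoc : Set.Ioc a b ⊆ Set.Icc 1 b := fun _ hx => ⟨Nat.one_le_of_lt hx.1, hx.2⟩
  rw [← Set.ncard_coe_finset]
  exact Set.ncard_le_ncard (Set.subset_inter hYA (hY.trans hIoc))
    ((Set.finite_Icc 1 b).subset Set.inter_subset_right)

theorem stmt18_general (k : ℕ) (φ : ℕ → ℕ)
    (f : ℕ → Fin k)
    (w : ℕ → ℕ)
    -- `w (i+1)` is the least `w' > w i` with `(w' - w i) → (φ w')¹_k`
    (hwstep : ∀ i, w i < w (i + 1) ∧ Arrow1 (w (i + 1) - w i) (φ (w (i + 1))) k ∧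
      ∀ v, w i < v → v < w (i + 1) → ¬ Arrow1 (v - w i) (φ v) k) :
    -- (1) in each interval `(w i, w (i+1)]` there is an `f`-monochromatic
    --     set of size at least `φ (w (i+1))`
    (∀ i : ℕ, ∃ Y : Finset ℕ, ↑Y ⊆ Set.Ioc (w i) (w (i + 1)) ∧
      φ (w (i + 1)) ≤ Y.card ∧ ∃ c : Fin k, ∀ y ∈ Y, f y = c) ∧
    -- (2) given any such blocks `Y i` and any infinite `H` on which the
    --     induced coloring is constant, `A = ⋃_{i ∈ H} Y i` is homogeneous
    --     for `f` and `|A ∩ {1,…,w (i+1)}| ≥ φ (w (i+1))` for all `i ∈ H`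
    (∀ Y : ℕ → Finset ℕ,
      (∀ i, ↑(Y i) ⊆ Set.Ioc (w i) (w (i + 1)) ∧ φ (w (i + 1)) ≤ (Y i).card) →
      ∀ H : Set ℕ, H.Infinite →
      ∀ c : Fin k, (∀ i ∈ H, ∀ y ∈ Y i, f y = c) →
        (∀ a ∈ ⋃ i ∈ H, ((Y i : Set ℕ)), f a = c) ∧
        ∀ i ∈ H, φ (w (i + 1)) ≤
          ((⋃ j ∈ H, ((Y j : Set ℕ))) ∩ Set.Icc 1 (w (i + 1))).ncard) := by
  refine ⟨fun i => ?_, fun Y hY H _ c hc => ⟨fun a ha => ?_, fun i hi => ?_⟩⟩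
  · obtain ⟨Y, hsub, hcard, hconst⟩ := (hwstep i).2.1.exists_subset_Ioc f
    exact ⟨Y, hsub, hcard.ge, hconst⟩
  · obtain ⟨i, hi, hai⟩ := Set.mem_iUnion₂.1 ha
    exact hc i hi a hai
  · have hYA : (Y i : Set ℕ) ⊆ ⋃ j ∈ H, (Y j : Set ℕ) :=
      Set.subset_biUnion_of_mem (u := fun j => (Y j : Set ℕ)) hi
    exact (hY i).2.trans (Finset.card_le_ncard_inter_Icc_one hYA (hY i).1)

theorem stmt18 (k : ℕ) (hk : 1 ≤ k) (φ : ℕ → ℕ)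
    (hmono : Monotone φ) (hunb : ∀ b, ∃ v, b ≤ φ v)
    (harrow : ∀ w, Arrow1 w (φ w) (k + 1))
    (f : ℕ → Fin k)
    (w : ℕ → ℕ) (hw0 : w 0 = 1)
    -- `w (i+1)` is the least `w' > w i` with `(w' - w i) → (φ w')¹_k`
    (hwstep : ∀ i, w i < w (i + 1) ∧ Arrow1 (w (i + 1) - w i) (φ (w (i + 1))) k ∧
      ∀ v, w i < v → v < w (i + 1) → ¬ Arrow1 (v - w i) (φ v) k) :
    -- (1) in each interval `(w i, w (i+1)]` there is an `f`-monochromatic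
    --     set of size at least `φ (w (i+1))`
    (∀ i : ℕ, ∃ Y : Finset ℕ, ↑Y ⊆ Set.Ioc (w i) (w (i + 1)) ∧
      φ (w (i + 1)) ≤ Y.card ∧ ∃ c : Fin k, ∀ y ∈ Y, f y = c) ∧
    -- (2) given any such blocks `Y i` and any infinite `H` on which the
    --     induced coloring is constant, `A = ⋃_{i ∈ H} Y i` is homogeneous
    --     for `f` and `|A ∩ {1,…,w (i+1)}| ≥ φ (w (i+1))` for all `i ∈ H`
    (∀ Y : ℕ → Finset ℕ,
      (∀ i, ↑(Y i) ⊆ Set.Ioc (w i) (w (i + 1)) ∧ φ (w (i + 1)) ≤ (Y i).card) →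
      ∀ H : Set ℕ, H.Infinite →
      ∀ c : Fin k, (∀ i ∈ H, ∀ y ∈ Y i, f y = c) →
        (∀ a ∈ ⋃ i ∈ H, ((Y i : Set ℕ)), f a = c) ∧
        ∀ i ∈ H, φ (w (i + 1)) ≤
          ((⋃ j ∈ H, ((Y j : Set ℕ))) ∩ Set.Icc 1 (w (i + 1))).ncard) :=
  stmt18_general k φ f w hwstep
end
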